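/- Let u₀ ∈ H²_{0,σ}(T³) and let u_n^{α,m}, m = 0,…,M, be a solution of the Euler–Fourier–Galerkin scheme. Then for all M ∈ ℕ and all m = 1,…,M the discrete energy equality holds: ‖u_n^{α,m}‖₂² + Σ_{i=1}^m ‖u_n^{α,i} − u_n^{α,i−1}‖₂² + 2κ Σ_{i=1}^m ‖∇u_n^{α,i}‖₂² + α²‖∇u_n^{α,m}‖₂² + α² Σ_{i=1}^m ‖∇u_n^{α,i} − ∇u_n^{α,i−1}‖₂² = ‖P_n u₀‖₂² + α²‖∇P_n u₀‖₂², and in particular the left-hand side is bounded by ‖u₀‖₂² + α²‖∇u₀‖₂². -/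

import Mathlib

/-!
Common framework: the 3-torus `𝕋³ = ℝ³ / 2πℤ³` is modelled by `2π`-periodic
functions on `ℝ³`; space integrals are taken over the fundamental domain
`Box = [0,2π)³`.  Vector fields are described through their Fourier
coefficients `c : (Fin 3 → ℤ) → Fin 3 → ℂ` (with reality, zero-mean and
divergence-free constraints), realized as functions via `u(x) = Σ_k c_k e^{ik·x}`.
`L²`-type norms of such fields are expressed through Parseval's identity.
-/

noncomputable section

open MeasureTheory Filter Real

/-- Points of `ℝ³`; the torus is `ℝ³` modulo `2π`-periodicity. -/
abbrev Vec3 : Type := Fin 3 → ℝ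

/-- Fundamental domain `[0,2π)³` of the torus `𝕋³ = ℝ³/2πℤ³`. -/
def Box : Set Vec3 := Set.univ.pi fun _ : Fin 3 => Set.Ico (0 : ℝ) (2 * π)

/-- `2π`-periodicity in each space variable. -/
def SpacePeriodic {E : Type*} (f : Vec3 → E) : Prop :=
  ∀ (x : Vec3) (m : Fin 3 → ℤ), f (fun j => x j + 2 * π * (m j : ℝ)) = f x

/-- Fourier coefficients of a vector field on the torus. -/
abbrev Coef : Type := (Fin 3 → ℤ) → Fin 3 → ℂ

/-- `|k|²` for a frequency `k ∈ ℤ³`. -/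
def kSq (k : Fin 3 → ℤ) : ℤ := ∑ j, (k j) ^ 2

/-- The character `e^{i k·x}`. -/
def eK (k : Fin 3 → ℤ) (x : Vec3) : ℂ :=
  Complex.exp (Complex.I * ∑ j, (k j : ℂ) * (x j : ℂ))

/-- Realization of Fourier coefficients as a (real) vector field on the torus. -/
def realize (c : Coef) (x : Vec3) (i : Fin 3) : ℝ := (∑' k, c k i * eK k x).re

/-- Realization of scalar Fourier coefficients as a function on the torus. -/
def realizeS (q : (Fin 3 → ℤ) → ℂ) (x : Vec3) : ℝ := (∑' k, q k * eK k x).re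

/-- Fourier coefficients of the partial derivative `∂_j u`. -/
def pd (j : Fin 3) (c : Coef) : Coef := fun k i => Complex.I * (k j : ℂ) * c k i

/-- Fourier coefficients of `Δu`. -/
def lapC (c : Coef) : Coef := fun k i => -((kSq k : ℂ)) * c k i

/-- Difference of two coefficient fields. -/
def subC (c d : Coef) : Coef := fun k i => c k i - d k i

/-- A real, zero-mean, divergence-free field (spectral form of the constraints). -/
structure IsDivFreeField (c : Coef) : Prop where
  zeroMean : ∀ i, c 0 i = 0
  reality : ∀ k i, c (-k) i = starRingEnd ℂ (c k i)
  divFree : ∀ k, ∑ j, (k j : ℂ) * c k j = 0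

/-- Membership in `V_n`: a real, zero-mean, divergence-free trigonometric
polynomial with modes `0 < |k| ≤ n`. -/
def MemVn (n : ℕ) (c : Coef) : Prop :=
  IsDivFreeField c ∧ ∀ k, (n : ℤ) ^ 2 < kSq k → ∀ i, c k i = 0

/-- `u₀ ∈ H²_{0,σ}(𝕋³)`, spectrally. -/
def MemH2 (c : Coef) : Prop :=
  IsDivFreeField c ∧ Summable fun k => (1 + (kSq k : ℝ)) ^ 2 * ∑ i, Complex.normSq (c k i)

/-- The projection `P_n` (restricted to divergence-free fields, it is the
truncation to the modes `|k| ≤ n`). -/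
def projN (n : ℕ) (c : Coef) : Coef :=
  fun k i => if kSq k ≤ (n : ℤ) ^ 2 then c k i else 0

/-- `‖u‖₂²` (squared `L²(𝕋³)` norm), via Parseval. -/
def l2S (c : Coef) : ℝ := (2 * π) ^ 3 * ∑' k, ∑ i, Complex.normSq (c k i)

/-- `‖∇u‖₂²`, via Parseval. -/
def gradS (c : Coef) : ℝ := (2 * π) ^ 3 * ∑' k, (kSq k : ℝ) * ∑ i, Complex.normSq (c k i)

/-- `‖Δu‖₂²`, via Parseval. -/
def lapS (c : Coef) : ℝ := (2 * π) ^ 3 * ∑' k, (kSq k : ℝ) ^ 2 * ∑ i, Complex.normSq (c k i)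

/-- The `L²(𝕋³)` inner product `(u,w)`, via Parseval. -/
def ipS (c d : Coef) : ℝ := (2 * π) ^ 3 * ∑' k, ∑ i, (c k i * starRingEnd ℂ (d k i)).re

/-- The inner product `(∇u,∇w)`, via Parseval. -/
def gipS (c d : Coef) : ℝ :=
  (2 * π) ^ 3 * ∑' k, (kSq k : ℝ) * ∑ i, (c k i * starRingEnd ℂ (d k i)).re

/-- The trilinear term `((u·∇)u, w)` in `L²(𝕋³)`. -/
def nlF (c w : Coef) : ℝ :=
  ∫ x in Box, ∑ i, (∑ j, realize c x j * realize (pd j c) x i) * realize w x i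

/-- Discrete time derivative of coefficient fields: `(a - b)/κ`. -/
def dtc (κ : ℝ) (a b : Coef) : Coef := fun k i => (a k i - b k i) / (κ : ℂ)

/-- The Euler–Fourier–Galerkin scheme for the Navier–Stokes–Voigt equations:
`u 0 = P_n u₀` and, for `m = 1,…,M`, `u m ∈ V_n` satisfies
`(d_t u^m, w) + α²(d_t ∇u^m, ∇w) + (∇u^m, ∇w) + ((u^m·∇)u^m, w) = 0`
for all `w ∈ V_n`, where `κ = T/M`. -/
def Scheme (T α : ℝ) (n M : ℕ) (c0 : Coef) (u : ℕ → Coef) : Prop :=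
  u 0 = projN n c0 ∧
  ∀ m, 1 ≤ m → m ≤ M → MemVn n (u m) ∧
    ∀ w : Coef, MemVn n w →
      ipS (dtc (T / (M : ℝ)) (u m) (u (m - 1))) w
        + α ^ 2 * gipS (dtc (T / (M : ℝ)) (u m) (u (m - 1))) w
        + gipS (u m) w + nlF (u m) w = 0

/-- Piecewise-constant time interpolant: equals `u m` on `[t_{m-1}, t_m)`,
and `u M` at `t = T`, where `t_m = m·(T/M)`. -/
def pwc (T : ℝ) (M : ℕ) (u : ℕ → Coef) : ℝ → Coef := fun t =>
  if t = T then u M else u ((Int.floor (t / (T / (M : ℝ)))).toNat + 1)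

/-- Piecewise-linear (in time) interpolant. -/
def pwl (T : ℝ) (M : ℕ) (u : ℕ → Coef) : ℝ → Coef := fun t =>
  if t = T then u M else fun k i =>
    u (Int.floor (t / (T / (M : ℝ)))).toNat k i +
      (((t - ((Int.floor (t / (T / (M : ℝ)))).toNat : ℝ) * (T / (M : ℝ))) / (T / (M : ℝ)) : ℝ) : ℂ) *
        (u ((Int.floor (t / (T / (M : ℝ)))).toNat + 1) k i
          - u (Int.floor (t / (T / (M : ℝ)))).toNat k i)

/-- The time derivative `∂_t v` of the piecewise-linear interpolant:
equals `d_t u^m = (u^m - u^{m-1})/κ` on `(t_{m-1}, t_m)`. -/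
def pwdt (T : ℝ) (M : ℕ) (u : ℕ → Coef) : ℝ → Coef := fun t k i =>
  (u ((Int.floor (t / (T / (M : ℝ)))).toNat + 1) k i
    - u (Int.floor (t / (T / (M : ℝ)))).toNat k i) / ((T / (M : ℝ) : ℝ) : ℂ)

/-- Spectral solution of the pressure Poisson problem
`-Δp = ∇·(∇·(u⊗u))`, i.e. `p̂_k = -(k⊗k/|k|²) : (u⊗u)^̂_k` for `k ≠ 0`. -/
def presC (c : Coef) : (Fin 3 → ℤ) → ℂ := fun k =>
  if kSq k = 0 then 0 else
    -(∑ a, ∑ b, (k a : ℂ) * (k b : ℂ) * ∑' m, c m a * c (k - m) b) / (kSq k : ℂ)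

/-- The Leray projection at frequency `k`: `v ↦ v - (v·k)k/|k|²`. -/
def lerayK (k : Fin 3 → ℤ) (v : Fin 3 → ℂ) : Fin 3 → ℂ := fun i =>
  if kSq k = 0 then 0 else v i - ((∑ j, (k j : ℂ) * v j) / (kSq k : ℂ)) * (k i : ℂ)

/-- `Q_n = P - P_n`: the Leray-projected Fourier modes with `|k| > n`. -/
def Qn (n : ℕ) (c : Coef) : Coef := fun k =>
  if kSq k ≤ (n : ℤ) ^ 2 then 0 else lerayK k (c k)

/-- Fourier coefficients of `(u·∇)u` (a convolution). -/
def nlinC (c : Coef) : Coef := fun k i =>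
  ∑' m : Fin 3 → ℤ, ∑ j, c (k - m) j * (Complex.I * (m j : ℂ) * c m i)

/-- The partial derivative `∂_j f` of a function on the torus. -/
def pdF (f : Vec3 → ℝ) (j : Fin 3) (x : Vec3) : ℝ := fderiv ℝ f x (Pi.single j 1)

/-- The Laplacian of a function on the torus. -/
def lapF (f : Vec3 → ℝ) (x : Vec3) : ℝ := ∑ j, pdF (fun y => pdF f j y) j x

/-- The `k`-th Fourier coefficient of a function on the torus. -/
def fCoef (f : Vec3 → ℝ) (k : Fin 3 → ℤ) : ℂ :=
  ((1 / (2 * π) ^ 3 : ℝ) : ℂ) * ∫ x in Box, (f x : ℂ) * eK (-k) x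

/-- Fourier coefficients of the product `u·φ` of a (coefficient) vector field
with a scalar function. -/
def prodCoef (U : Coef) (f : Vec3 → ℝ) : Coef := fun k i => ∑' m, U m i * fCoef f (k - m)

/-- Squared `H^{-2}` norm: `Σ_{k≠0} |k|^{-4} |ĝ_k|²`. -/
def hm2 (c : Coef) : ℝ :=
  ∑' k, if kSq k = 0 then 0 else (∑ i, Complex.normSq (c k i)) / (kSq k : ℝ) ^ 2

/-- A scalar space-time test function: smooth, `2π`-periodic in space, with
compact time support contained in `(0,T)`. -/
structure IsTestS (T : ℝ) (φ : ℝ → Vec3 → ℝ) : Prop where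
  smooth : ContDiff ℝ (⊤ : ℕ∞) fun p : ℝ × Vec3 => φ p.1 p.2
  periodic : ∀ t, SpacePeriodic (φ t)
  tsupport : ∃ a b : ℝ, 0 < a ∧ b < T ∧ ∀ t, t ∉ Set.Icc a b → ∀ x, φ t x = 0

/-- A vector test function for the weak formulation: smooth, `2π`-periodic in
space, divergence-free, with zero spatial mean, supported in time in `[0,T)`. -/
structure IsTestV (T : ℝ) (φ : ℝ → Vec3 → Fin 3 → ℝ) : Prop where
  smooth : ContDiff ℝ (⊤ : ℕ∞) fun p : ℝ × Vec3 => φ p.1 p.2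
  periodic : ∀ t, SpacePeriodic (φ t)
  tsupport : ∃ b : ℝ, b < T ∧ ∀ t, b ≤ t → ∀ x i, φ t x i = 0
  divFree : ∀ t x, ∑ j, pdF (fun y => φ t y j) j x = 0
  zeroMean : ∀ t i, (∫ x in Box, φ t x i) = 0

/-- `u ∈ L^∞(0,T;L²_{0,σ}) ∩ L²(0,T;H¹_{0,σ})`, with `G` its weak spatial
gradient (`G t x j i = ∂_j u_i(t,x)`). -/
structure InEnergySpace (T : ℝ) (u : ℝ → Vec3 → Fin 3 → ℝ)
    (G : ℝ → Vec3 → Fin 3 → Fin 3 → ℝ) : Prop where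
  meas_u : Measurable fun p : ℝ × Vec3 => u p.1 p.2
  meas_G : Measurable fun p : ℝ × Vec3 => G p.1 p.2
  periodic_u : ∀ t, SpacePeriodic (u t)
  periodic_G : ∀ t, SpacePeriodic (G t)
  linfty_l2 : ∃ C : ℝ, ∀ᵐ t ∂volume.restrict (Set.Ioo 0 T),
    (∫ x in Box, ∑ i, (u t x i) ^ 2) ≤ C
  l2_h1 : IntegrableOn
    (fun p : ℝ × Vec3 => ∑ i, (u p.1 p.2 i) ^ 2 + ∑ j, ∑ i, (G p.1 p.2 j i) ^ 2)
    (Set.Ioo 0 T ×ˢ Box)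
  weak_grad : ∀ ψ : ℝ → Vec3 → ℝ, IsTestS T ψ → ∀ i j,
    (∫ t in Set.Ioo 0 T, ∫ x in Box, u t x i * pdF (ψ t) j x)
      = -∫ t in Set.Ioo 0 T, ∫ x in Box, G t x j i * ψ t x
  zeroMean : ∀ᵐ t ∂volume.restrict (Set.Ioo 0 T), ∀ i, (∫ x in Box, u t x i) = 0
  divFree : ∀ ψ : ℝ → Vec3 → ℝ, IsTestS T ψ →
    (∫ t in Set.Ioo 0 T, ∫ x in Box, ∑ j, u t x j * pdF (ψ t) j x) = 0

/-- A Leray–Hopf weak solution of the Navier–Stokes equations on `(0,T)×𝕋³`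
with initial datum `u₀` (given by its Fourier coefficients `c0`); `G` is the
weak gradient of `u`. -/
structure IsLerayHopf (T : ℝ) (c0 : Coef) (u : ℝ → Vec3 → Fin 3 → ℝ)
    (G : ℝ → Vec3 → Fin 3 → Fin 3 → ℝ) : Prop where
  energySpace : InEnergySpace T u G
  weakForm : ∀ φ : ℝ → Vec3 → Fin 3 → ℝ, IsTestV T φ →
    (∫ t in Set.Ioo 0 T,
      ((∫ x in Box, ∑ i, u t x i * deriv (fun s => φ s x i) t)
        - (∫ x in Box, ∑ i, ∑ j, G t x j i * pdF (fun y => φ t y i) j x)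
        - ∫ x in Box, ∑ i, (∑ j, u t x j * G t x j i) * φ t x i))
      + (∫ x in Box, ∑ i, realize c0 x i * φ 0 x i) = 0
  energyIneq : ∀ t ∈ Set.Icc 0 T,
    (1 / 2) * (∫ x in Box, ∑ i, (u t x i) ^ 2)
      + (∫ s in Set.Ioo 0 t, ∫ x in Box, ∑ j, ∑ i, (G s x j i) ^ 2)
      ≤ (1 / 2) * l2S c0

/-- A suitable weak solution: a Leray–Hopf weak solution together with a
pressure `p ∈ L^{5/3}((0,T)×𝕋³)` satisfying the local energy inequality. -/
structure IsSuitable (T : ℝ) (c0 : Coef) (u : ℝ → Vec3 → Fin 3 → ℝ)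
    (G : ℝ → Vec3 → Fin 3 → Fin 3 → ℝ) (p : ℝ → Vec3 → ℝ) : Prop where
  lerayHopf : IsLerayHopf T c0 u G
  meas_p : Measurable fun q : ℝ × Vec3 => p q.1 q.2
  p_L53 : IntegrableOn (fun q : ℝ × Vec3 => |p q.1 q.2| ^ ((5 : ℝ) / 3))
    (Set.Ioo 0 T ×ˢ Box)
  localEnergy : ∀ φ : ℝ → Vec3 → ℝ, IsTestS T φ → (∀ t x, 0 ≤ φ t x) →
    (∫ t in Set.Ioo 0 T, ∫ x in Box, (∑ j, ∑ i, (G t x j i) ^ 2) * φ t x)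
      ≤ ∫ t in Set.Ioo 0 T, ∫ x in Box,
          ((∑ i, (u t x i) ^ 2) / 2) * (deriv (fun s => φ s x) t + lapF (φ t) x)
            + ((∑ i, (u t x i) ^ 2) / 2 + p t x) * ∑ j, u t x j * pdF (φ t) j x


/-!
Testing the scheme with `w = u^m` removes the convection term: for a divergence-free
trigonometric polynomial, `((u·∇)u, u)` expands into Fourier triads over `p + q + r = 0`
which cancel in pairs under `q ↔ r`. What is left,
`(u^m - u^{m-1}, u^m) + α² (∇(u^m - u^{m-1}), ∇u^m) + κ ‖∇u^m‖² = 0`, becomes a one-step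
energy balance through `2 (a - b, a) = ‖a‖² - ‖b‖² + ‖a - b‖²`, and the balances telescope.
The bound holds because `P_n` only discards Fourier modes.
-/

section

open Complex Finset
open scoped ComplexConjugate

/-- A box of frequencies containing the ball `|k| ≤ n`. -/
def Kn (n : ℕ) : Finset (Fin 3 → ℤ) :=
  Fintype.piFinset fun _ => Icc (-(n : ℤ)) n

lemma kSq_nonneg (k : Fin 3 → ℤ) : 0 ≤ kSq k :=
  sum_nonneg fun _ _ => sq_nonneg _

lemma mem_Kn_of_kSq_le {n : ℕ} {k : Fin 3 → ℤ} (h : kSq k ≤ (n : ℤ) ^ 2) : k ∈ Kn n := by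
  refine Fintype.mem_piFinset.2 fun j =>
    mem_Icc.2 (abs_le.1 (abs_le_of_sq_le_sq ?_ (by positivity)))
  exact (single_le_sum (f := fun j => k j ^ 2) (fun _ _ => sq_nonneg _) (mem_univ j)).trans h

def SupportedIn (K : Finset (Fin 3 → ℤ)) (c : Coef) : Prop := ∀ k ∉ K, ∀ i, c k i = 0

lemma MemVn.supportedIn {n : ℕ} {c : Coef} (h : MemVn n c) : SupportedIn (Kn n) c :=
  fun k hk => h.2 k (not_le.1 fun hle => hk (mem_Kn_of_kSq_le hle))

lemma supportedIn_projN (n : ℕ) (c : Coef) : SupportedIn (Kn n) (projN n c) :=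
  fun _ hk _ => if_neg fun hle => hk (mem_Kn_of_kSq_le hle)

lemma SupportedIn.subC {K : Finset (Fin 3 → ℤ)} {a b : Coef} (ha : SupportedIn K a)
    (hb : SupportedIn K b) : SupportedIn K (subC a b) := fun k hk i => by
  simp [_root_.subC, ha k hk i, hb k hk i]

lemma SupportedIn.pd {K : Finset (Fin 3 → ℤ)} {c : Coef} (h : SupportedIn K c) (j : Fin 3) :
    SupportedIn K (pd j c) := fun k hk i => by
  simp [_root_.pd, h k hk i]

lemma two_mul_re_sub_mul_conj (z w : ℂ) :
    2 * ((z - w) * conj z).re = normSq z - normSq w + normSq (z - w) := by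
  simp only [normSq_apply, mul_re, sub_re, sub_im, conj_re, conj_im]
  ring

lemma two_mul_tsum_weighted_polarization (ρ : (Fin 3 → ℤ) → ℝ) {K : Finset (Fin 3 → ℤ)}
    {a b : Coef} (ha : SupportedIn K a) (hb : SupportedIn K b) :
    2 * ∑' k, ρ k * ∑ i, (subC a b k i * conj (a k i)).re
      = ∑' k, ρ k * ∑ i, normSq (a k i) - ∑' k, ρ k * ∑ i, normSq (b k i)
        + ∑' k, ρ k * ∑ i, normSq (subC a b k i) := by
  have hab := ha.subC hb
  rw [tsum_eq_sum (s := K) fun k hk => by simp [hab k hk],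
    tsum_eq_sum (s := K) fun k hk => by simp [ha k hk],
    tsum_eq_sum (s := K) fun k hk => by simp [hb k hk],
    tsum_eq_sum (s := K) fun k hk => by simp [hab k hk],
    mul_sum, ← sum_sub_distrib, ← sum_add_distrib]
  refine sum_congr rfl fun k _ => ?_
  simp only [_root_.subC, mul_sum, ← sum_sub_distrib, ← sum_add_distrib]
  refine sum_congr rfl fun i _ => ?_
  linear_combination ρ k * two_mul_re_sub_mul_conj (a k i) (b k i)

lemma two_mul_ipS_subC_self {K : Finset (Fin 3 → ℤ)} {a b : Coef} (ha : SupportedIn K a)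
    (hb : SupportedIn K b) : 2 * ipS (subC a b) a = l2S a - l2S b + l2S (subC a b) := by
  have h := two_mul_tsum_weighted_polarization 1 ha hb
  simp only [Pi.one_apply, one_mul] at h
  rw [ipS, l2S, l2S, l2S]
  linear_combination (2 * π) ^ 3 * h

lemma two_mul_gipS_subC_self {K : Finset (Fin 3 → ℤ)} {a b : Coef} (ha : SupportedIn K a)
    (hb : SupportedIn K b) : 2 * gipS (subC a b) a = gradS a - gradS b + gradS (subC a b) := by
  rw [gipS, gradS, gradS, gradS]
  linear_combination (2 * π) ^ 3 * two_mul_tsum_weighted_polarization (fun k => (kSq k : ℝ)) ha hb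

lemma gipS_self (c : Coef) : gipS c c = gradS c := by
  simp only [gipS, gradS, mul_conj, ofReal_re]

lemma ipS_dtc (κ : ℝ) (a b w : Coef) : ipS (dtc κ a b) w = ipS (subC a b) w / κ := by
  simp only [ipS, dtc, _root_.subC, div_mul_eq_mul_div, div_ofReal_re, ← sum_div, ← mul_div_assoc,
    tsum_div_const]

lemma gipS_dtc (κ : ℝ) (a b w : Coef) : gipS (dtc κ a b) w = gipS (subC a b) w / κ := by
  simp only [gipS, dtc, _root_.subC, div_mul_eq_mul_div, div_ofReal_re, ← sum_div, ← mul_div_assoc,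
    tsum_div_const]

@[fun_prop]
lemma continuous_eK (k : Fin 3 → ℤ) : Continuous (eK k) := by
  unfold eK; fun_prop

lemma eK_add (p q : Fin 3 → ℤ) (x : Vec3) : eK (p + q) x = eK p x * eK q x := by
  simp only [eK, ← Complex.exp_add, ← mul_add, ← sum_add_distrib, Pi.add_apply, Int.cast_add,
    add_mul]

lemma conj_eK (k : Fin 3 → ℤ) (x : Vec3) : conj (eK k x) = eK (-k) x := by
  simp only [eK, ← exp_conj, map_mul, conj_I, map_sum, conj_ofReal, map_intCast, Pi.neg_apply,
    Int.cast_neg, neg_mul, sum_neg_distrib, mul_neg]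

/-- The reality condition makes the Fourier series real, so `realize` loses nothing. -/
lemma ofReal_realize {c : Coef} (hr : ∀ k i, c (-k) i = conj (c k i)) (x : Vec3) (i : Fin 3) :
    (realize c x i : ℂ) = ∑' k, c k i * eK k x := by
  refine conj_eq_iff_re.1 ?_
  rw [conj_tsum, ← (Equiv.neg (Fin 3 → ℤ)).tsum_eq]
  simp only [Equiv.neg_apply, map_mul, conj_eK, neg_neg, hr, conj_conj]

lemma measurableSet_Box : MeasurableSet Box :=
  MeasurableSet.univ_pi fun _ => measurableSet_Ico

lemma integrableOn_Box {f : Vec3 → ℂ} (hf : Continuous f) : IntegrableOn f Box :=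
  (hf.continuousOn.integrableOn_compact (isCompact_univ_pi fun _ => isCompact_Icc)).mono_set
    (Set.pi_mono fun _ _ => Set.Ico_subset_Icc_self)

lemma setIntegral_Ico_exp_I_mul_int (k : ℤ) :
    ∫ t in Set.Ico (0 : ℝ) (2 * π), exp (I * k * t) = if k = 0 then ((2 * π : ℝ) : ℂ) else 0 := by
  rw [integral_Ico_eq_integral_Ioo, ← integral_Ioc_eq_integral_Ioo,
    ← intervalIntegral.integral_of_le (by positivity)]
  split_ifs with hk
  · simp [hk]
  · have hIk : I * k ≠ 0 := mul_ne_zero I_ne_zero (Int.cast_ne_zero.2 hk)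
    rw [integral_exp_mul_complex hIk, ofReal_zero, mul_zero, Complex.exp_zero,
      show I * k * ((2 * π : ℝ) : ℂ) = k * (2 * π * I) by push_cast; ring,
      exp_int_mul_two_pi_mul_I, sub_self, zero_div]

lemma setIntegral_Box_eK (k : Fin 3 → ℤ) :
    ∫ x in Box, eK k x = if k = 0 then (((2 * π) ^ 3 : ℝ) : ℂ) else 0 := by
  have hprod (x : Vec3) : eK k x = ∏ j, exp (I * k j * x j) := by
    rw [eK, ← Complex.exp_sum, mul_sum]
    simp only [mul_assoc]
  simp_rw [hprod]
  rw [Box, volume_pi, Measure.restrict_pi_pi,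
    integral_fintype_prod_eq_prod (fun j (t : ℝ) => exp (I * k j * t))]
  simp_rw [setIntegral_Ico_exp_I_mul_int, prod_ite_zero, prod_const, card_univ, Fintype.card_fin]
  simp [funext_iff]

lemma setIntegral_Box_trigPoly_mul_mul (K : Finset (Fin 3 → ℤ)) (a b d : (Fin 3 → ℤ) → ℂ) :
    ∫ x in Box, (∑ p ∈ K, a p * eK p x) * (∑ q ∈ K, b q * eK q x) * (∑ r ∈ K, d r * eK r x)
      = ∑ p ∈ K, ∑ q ∈ K, ∑ r ∈ K,
          a p * b q * d r * if p + q + r = 0 then (((2 * π) ^ 3 : ℝ) : ℂ) else 0 := by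
  have hexpand (x : Vec3) :
      (∑ p ∈ K, a p * eK p x) * (∑ q ∈ K, b q * eK q x) * (∑ r ∈ K, d r * eK r x)
        = ∑ p ∈ K, ∑ q ∈ K, ∑ r ∈ K, a p * b q * d r * eK (p + q + r) x := by
    rw [sum_mul_sum, sum_mul]
    refine sum_congr rfl fun p _ => ?_
    rw [sum_mul]
    refine sum_congr rfl fun q _ => ?_
    rw [mul_sum]
    exact sum_congr rfl fun r _ => by rw [eK_add, eK_add]; ring
  simp_rw [hexpand]
  rw [integral_finsetSum _ fun p _ => integrableOn_Box (by fun_prop)]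
  refine sum_congr rfl fun p _ => ?_
  rw [integral_finsetSum _ fun q _ => integrableOn_Box (by fun_prop)]
  refine sum_congr rfl fun q _ => ?_
  rw [integral_finsetSum _ fun r _ => integrableOn_Box (by fun_prop)]
  exact sum_congr rfl fun r _ => by rw [integral_const_mul, setIntegral_Box_eK]

lemma sum_sum_eq_zero_of_add_swap {ι R : Type*} [NonAssocSemiring R] [NoZeroDivisors R]
    [CharZero R] (s : Finset ι) {g : ι → ι → R} (h : ∀ q r, g q r + g r q = 0) :
    ∑ q ∈ s, ∑ r ∈ s, g q r = 0 := by
  refine add_self_eq_zero.1 ?_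
  nth_rewrite 2 [sum_comm]
  rw [← sum_add_distrib]
  exact sum_eq_zero fun q _ => by rw [← sum_add_distrib]; exact sum_eq_zero fun r _ => h q r

/-- The Fourier triads into which `((u·∇)u, u)` expands. -/
def convectionTriad (c : Coef) (p q r : Fin 3 → ℤ) : ℂ :=
  ∑ i, ∑ j, c p j * pd j c q i * c r i * if p + q + r = 0 then (((2 * π) ^ 3 : ℝ) : ℂ) else 0

lemma ofReal_nlF_self {K : Finset (Fin 3 → ℤ)} {c : Coef} (hr : ∀ k i, c (-k) i = conj (c k i))
    (hK : SupportedIn K c) :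
    (nlF c c : ℂ) = ∑ p ∈ K, ∑ q ∈ K, ∑ r ∈ K, convectionTriad c p q r := by
  have hpd_reality (j : Fin 3) (k : Fin 3 → ℤ) (i : Fin 3) : pd j c (-k) i = conj (pd j c k i) := by
    simp only [pd, hr, map_mul, conj_I, Pi.neg_apply, Int.cast_neg, map_intCast]
    ring
  have hfin {d : Coef} (hd : SupportedIn K d) (x : Vec3) (i : Fin 3) :
      ∑' k, d k i * eK k x = ∑ k ∈ K, d k i * eK k x :=
    tsum_eq_sum fun k hk => by rw [hd k hk i, zero_mul]
  have hpoint (x : Vec3) :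
      ((∑ i, (∑ j, realize c x j * realize (pd j c) x i) * realize c x i : ℝ) : ℂ)
        = ∑ i, ∑ j, (∑ p ∈ K, c p j * eK p x) * (∑ q ∈ K, pd j c q i * eK q x)
            * (∑ r ∈ K, c r i * eK r x) := by
    push_cast
    simp only [ofReal_realize hr, ofReal_realize (hpd_reality _), hfin hK, hfin (hK.pd _), sum_mul]
  rw [nlF, ← integral_complex_ofReal, setIntegral_congr_fun measurableSet_Box fun x _ => hpoint x]
  calc _ = ∑ i, ∑ j, ∑ p ∈ K, ∑ q ∈ K, ∑ r ∈ K,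
        c p j * pd j c q i * c r i * if p + q + r = 0 then (((2 * π) ^ 3 : ℝ) : ℂ) else 0 := by
        rw [integral_finsetSum _ fun i _ => integrableOn_Box (by fun_prop)]
        refine sum_congr rfl fun i _ => ?_
        rw [integral_finsetSum _ fun j _ => integrableOn_Box (by fun_prop)]
        exact sum_congr rfl fun j _ => setIntegral_Box_trigPoly_mul_mul K _ _ _
    _ = _ := by simp_rw [convectionTriad, sum_comm (s := (univ : Finset (Fin 3))) (t := K)]

/-- On `p + q + r = 0` the two triads combine into a multiple of
`Σ_j (q_j + r_j) ĉ_p j = -p · ĉ_p = 0`. -/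
lemma convectionTriad_add_swap {c : Coef} (hdf : ∀ k, ∑ j, (k j : ℂ) * c k j = 0)
    (p q r : Fin 3 → ℤ) : convectionTriad c p q r + convectionTriad c p r q = 0 := by
  simp only [convectionTriad, add_right_comm p r q]
  split_ifs with hpqr
  · have hqr (j : Fin 3) : (q j : ℂ) + r j = -p j := by
      have h := congrFun hpqr j
      simp only [Pi.add_apply, Pi.zero_apply] at h
      exact_mod_cast (by omega : q j + r j = -p j)
    rw [← sum_add_distrib]
    refine sum_eq_zero fun i _ => ?_
    calc ∑ j, c p j * pd j c q i * c r i * (((2 * π) ^ 3 : ℝ) : ℂ)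
          + ∑ j, c p j * pd j c r i * c q i * (((2 * π) ^ 3 : ℝ) : ℂ)
        = -(I * c q i * c r i * (((2 * π) ^ 3 : ℝ) : ℂ)) * ∑ j, (p j : ℂ) * c p j := by
          rw [← sum_add_distrib, mul_sum]
          refine sum_congr rfl fun j _ => ?_
          simp only [pd]
          linear_combination (I * c q i * c r i * (((2 * π) ^ 3 : ℝ) : ℂ) * c p j) * hqr j
      _ = 0 := by rw [hdf, mul_zero]
  · simp

lemma IsDivFreeField.nlF_self_eq_zero {K : Finset (Fin 3 → ℤ)} {c : Coef} (hc : IsDivFreeField c)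
    (hK : SupportedIn K c) : nlF c c = 0 := by
  have h := ofReal_nlF_self hc.reality hK
  rw [sum_eq_zero fun p _ =>
    sum_sum_eq_zero_of_add_swap K (convectionTriad_add_swap hc.divFree p)] at h
  exact_mod_cast h

lemma MemH2.summable_weighted {c : Coef} (h : MemH2 c) {ρ : (Fin 3 → ℤ) → ℝ}
    (hρ₀ : ∀ k, 0 ≤ ρ k) (hρ : ∀ k, ρ k ≤ (1 + (kSq k : ℝ)) ^ 2) :
    Summable fun k => ρ k * ∑ i, normSq (c k i) :=
  h.2.of_nonneg_of_le (fun k => mul_nonneg (hρ₀ k) (sum_nonneg fun _ _ => normSq_nonneg _))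
    fun k => mul_le_mul_of_nonneg_right (hρ k) (sum_nonneg fun _ _ => normSq_nonneg _)

lemma tsum_weighted_projN_le {ρ : (Fin 3 → ℤ) → ℝ} (hρ₀ : ∀ k, 0 ≤ ρ k) (n : ℕ) {c : Coef}
    (hc : Summable fun k => ρ k * ∑ i, normSq (c k i)) :
    ∑' k, ρ k * ∑ i, normSq (projN n c k i) ≤ ∑' k, ρ k * ∑ i, normSq (c k i) := by
  have hle (k : Fin 3 → ℤ) :
      ρ k * ∑ i, normSq (projN n c k i) ≤ ρ k * ∑ i, normSq (c k i) := by
    unfold projN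
    split_ifs
    · rfl
    · simpa using mul_nonneg (hρ₀ k) (sum_nonneg fun i _ => normSq_nonneg (c k i))
  refine Summable.tsum_le_tsum hle (hc.of_nonneg_of_le (fun k => ?_) hle) hc
  exact mul_nonneg (hρ₀ k) (sum_nonneg fun _ _ => normSq_nonneg _)

lemma l2S_projN_le {c : Coef} (h : MemH2 c) (n : ℕ) : l2S (projN n c) ≤ l2S c := by
  have hsum := h.summable_weighted (ρ := 1) (fun _ => zero_le_one) fun k =>
    one_le_pow₀ (le_add_of_nonneg_right (Int.cast_nonneg (kSq_nonneg k)))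
  have := tsum_weighted_projN_le (fun _ => zero_le_one) n hsum
  simp only [one_mul] at this
  exact mul_le_mul_of_nonneg_left this (by positivity)

lemma gradS_projN_le {c : Coef} (h : MemH2 c) (n : ℕ) : gradS (projN n c) ≤ gradS c := by
  have hk (k : Fin 3 → ℤ) : (0 : ℝ) ≤ kSq k := Int.cast_nonneg (kSq_nonneg k)
  have hsum := h.summable_weighted hk fun k => by nlinarith [hk k]
  exact mul_le_mul_of_nonneg_left (tsum_weighted_projN_le hk n hsum) (by positivity)

section Scheme

variable {T α : ℝ} {n M : ℕ} {c0 : Coef} {u : ℕ → Coef}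

lemma Scheme.supportedIn (hu : Scheme T α n M c0 u) {m : ℕ} (hm : m ≤ M) :
    SupportedIn (Kn n) (u m) := by
  rcases Nat.eq_zero_or_pos m with rfl | hm₁
  · rw [hu.1]
    exact supportedIn_projN n c0
  · exact MemVn.supportedIn (hu.2 m hm₁ hm).1

lemma Scheme.energy_step (hT : 0 < T) (hu : Scheme T α n M c0 u) {i : ℕ} (h₁ : 1 ≤ i)
    (h₂ : i ≤ M) :
    l2S (u i) + α ^ 2 * gradS (u i)
      + (l2S (subC (u i) (u (i - 1))) + 2 * (T / M) * gradS (u i)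
        + α ^ 2 * gradS (subC (u i) (u (i - 1))))
      = l2S (u (i - 1)) + α ^ 2 * gradS (u (i - 1)) := by
  obtain ⟨hVn, hweak⟩ := hu.2 i h₁ h₂
  have hκ : T / M ≠ 0 := (div_pos hT (by exact_mod_cast (by omega : 0 < M))).ne'
  have h := hweak (u i) hVn
  rw [ipS_dtc, gipS_dtc, gipS_self, hVn.1.nlF_self_eq_zero hVn.supportedIn, add_zero] at h
  have hprev := hu.supportedIn (m := i - 1) (by omega)
  have hl2 := two_mul_ipS_subC_self hVn.supportedIn hprev
  have hgrad := two_mul_gipS_subC_self hVn.supportedIn hprev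
  have hbal := congrArg (T / M * ·) h
  simp only [mul_add, mul_zero, mul_left_comm (T / M) (α ^ 2), mul_div_cancel₀ _ hκ] at hbal
  linear_combination 2 * hbal - hl2 - α ^ 2 * hgrad

end Scheme

lemma add_sum_Icc_eq_of_step {E D : ℕ → ℝ} {m : ℕ}
    (h : ∀ i, 1 ≤ i → i ≤ m → E i + D i = E (i - 1)) : E m + ∑ i ∈ Icc 1 m, D i = E 0 := by
  induction m with
  | zero => simp
  | succ m ih =>
    have hlast := h (m + 1) (by omega) le_rfl
    rw [Nat.add_sub_cancel] at hlast
    rw [sum_Icc_succ_top (by omega)]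
    linarith [ih fun i h₁ h₂ => h i h₁ (by omega)]

end

theorem discrete_energy_equality_general
    (T : ℝ) (hT : 0 < T) (α : ℝ) (n M : ℕ)
    (c0 : Coef) (h0 : MemH2 c0) (u : ℕ → Coef) (hu : Scheme T α n M c0 u)
    (m : ℕ) (hmM : m ≤ M) :
    (l2S (u m) + (∑ i ∈ Finset.Icc 1 m, l2S (subC (u i) (u (i - 1))))
        + 2 * (T / (M : ℝ)) * (∑ i ∈ Finset.Icc 1 m, gradS (u i))
        + α ^ 2 * gradS (u m)
        + α ^ 2 * (∑ i ∈ Finset.Icc 1 m, gradS (subC (u i) (u (i - 1))))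
      = l2S (projN n c0) + α ^ 2 * gradS (projN n c0)) ∧
    (l2S (u m) + (∑ i ∈ Finset.Icc 1 m, l2S (subC (u i) (u (i - 1))))
        + 2 * (T / (M : ℝ)) * (∑ i ∈ Finset.Icc 1 m, gradS (u i))
        + α ^ 2 * gradS (u m)
        + α ^ 2 * (∑ i ∈ Finset.Icc 1 m, gradS (subC (u i) (u (i - 1))))
      ≤ l2S c0 + α ^ 2 * gradS c0) := by
  have henergy := add_sum_Icc_eq_of_step (m := m)
    (E := fun i => l2S (u i) + α ^ 2 * gradS (u i))
    (D := fun i => l2S (subC (u i) (u (i - 1))) + 2 * (T / M) * gradS (u i)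
      + α ^ 2 * gradS (subC (u i) (u (i - 1))))
    fun i h₁ h₂ => hu.energy_step hT h₁ (h₂.trans hmM)
  simp only [Finset.sum_add_distrib, ← Finset.mul_sum, hu.1] at henergy
  have hproj := add_le_add (l2S_projN_le h0 n)
    (mul_le_mul_of_nonneg_left (gradS_projN_le h0 n) (sq_nonneg α))
  exact ⟨by linear_combination henergy, by linarith⟩

/-- Lemma 3.1, discrete energy equality.
For a solution of the Euler–Fourier–Galerkin scheme one has, for all `M` and
all `m = 1,…,M`,
`‖u^m‖₂² + Σ_{i=1}^m ‖u^i−u^{i-1}‖₂² + 2κ Σ_{i=1}^m ‖∇u^i‖₂² + α²‖∇u^m‖₂²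
  + α² Σ_{i=1}^m ‖∇u^i−∇u^{i-1}‖₂² = ‖P_n u₀‖₂² + α²‖∇P_n u₀‖₂²
  ≤ ‖u₀‖₂² + α²‖∇u₀‖₂²`. -/
theorem discrete_energy_equality
    (T : ℝ) (hT : 0 < T) (α : ℝ) (hα : 0 < α) (n M : ℕ) (hM : 1 ≤ M)
    (c0 : Coef) (h0 : MemH2 c0) (u : ℕ → Coef) (hu : Scheme T α n M c0 u)
    (m : ℕ) (hm1 : 1 ≤ m) (hmM : m ≤ M) :
    (l2S (u m) + (∑ i ∈ Finset.Icc 1 m, l2S (subC (u i) (u (i - 1))))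
        + 2 * (T / (M : ℝ)) * (∑ i ∈ Finset.Icc 1 m, gradS (u i))
        + α ^ 2 * gradS (u m)
        + α ^ 2 * (∑ i ∈ Finset.Icc 1 m, gradS (subC (u i) (u (i - 1))))
      = l2S (projN n c0) + α ^ 2 * gradS (projN n c0)) ∧
    (l2S (u m) + (∑ i ∈ Finset.Icc 1 m, l2S (subC (u i) (u (i - 1))))
        + 2 * (T / (M : ℝ)) * (∑ i ∈ Finset.Icc 1 m, gradS (u i))
        + α ^ 2 * gradS (u m)
        + α ^ 2 * (∑ i ∈ Finset.Icc 1 m, gradS (subC (u i) (u (i - 1))))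
      ≤ l2S c0 + α ^ 2 * gradS c0) :=
  discrete_energy_equality_general T hT α n M c0 h0 u hu m hmM
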